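/- arXiv:1603.05645 — 2 statements merged into one kernel-verified Lean document; each statement's English description precedes it below -/
import Mathlib

section
/- Let G be a cyclic group of order r and let λ: {0,…,r−1} × (ℤ/rℤ) → ℂ× be a family of nonzero constants (indices λ^i_{k,ℓ} nonzero exactly when k ≡ ℓ + i mod r) satisfying the cocycle compatibility λ^i_{ℓ+i,ℓ} λ^j_{ℓ+i+j,ℓ+i} = λ^{i+j}_{ℓ+i+j,ℓ} for all i, j, ℓ (indices mod r, with λ^0 = 1 when the exponent reduces to 0). Fix a primitive r-th root of unity ζ. Then for each 1 ≤ j ≤ r the vector of ratios f_j = (1, ζ^j/λ^1_{2,1}, …, ζ^{j(r−1)}/λ^{r−1}_{r,1}) satisfies ζ^{ij} · (ζ^{(k−1)j}/λ^{k−1}_{k,1}) = (ζ^{(i+k−1)j}/λ^{i+k−1}_{i+k,1}) · λ^i_{i+k,k} for all i, k, and the r vectors f_1, …, f_r ∈ ℂ^r are linearly independent. -/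
/-!
Taking `(i, j, l) = (c, i, 1)` in the cocycle condition gives
`λ^c_{c+1,1} λ^i_{i+c+1,c+1} = λ^{i+c}_{i+c+1,1}`, and `c ↦ ζ^{c j}` is an additive character of
`ℤ/r`, so the compatibility identity is a one-line field computation. The vectors `f_j` are the `r`
distinct characters `c ↦ ζ^{c (j+1)}` rescaled coordinatewise by the nonzero `λ^c_{c+1,1}`, and
distinct characters are linearly independent.
-/

theorem LinearIndependent.div_right {ι α K : Type*} [Field K] {v : ι → α → K}
    (hv : LinearIndependent K v) {w : α → K} (hw : ∀ a, w a ≠ 0) :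
    LinearIndependent K fun i a => v i a / w a := by
  let e : (α → K) ≃ₗ[K] (α → K) :=
    LinearEquiv.piCongrRight fun a => LinearEquiv.smulOfNeZero K K (w a)⁻¹ (inv_ne_zero (hw a))
  have he : (fun i a => v i a / w a) = e ∘ v := by
    ext i a
    simp [e, div_eq_inv_mul]
  rw [he]
  exact hv.map' e.toLinearMap e.ker

theorem IsPrimitiveRoot.pow_succ_injective {M : Type*} [CommMonoid M] {ζ : M} {r : ℕ}
    (hζ : IsPrimitiveRoot ζ r) : Function.Injective fun j : Fin r => ζ ^ (j.val + 1) := by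
  intro j k h
  simp only [pow_succ] at h
  exact Fin.ext (hζ.pow_inj j.2 k.2 ((hζ.isUnit (Fin.pos j).ne').mul_right_cancel h))

theorem div_mul_eq_of_mul_eq {K : Type*} [Field K] {x y z a b m : K} (hxyz : x * y = z)
    (hab : a * m = b) (hb : b ≠ 0) :
    x * (y / a) = z / b * m := by
  have ha : a ≠ 0 := left_ne_zero_of_mul (hab ▸ hb)
  have hm : m ≠ 0 := right_ne_zero_of_mul (hab ▸ hb)
  subst hxyz hab
  field_simp

section PowChar

variable {M : Type*} [CommMonoid M] {r : ℕ} [NeZero r] {ζ : M}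

noncomputable def powChar (hζ : ζ ^ r = 1) (j : ℕ) : AddChar (ZMod r) M :=
  AddChar.zmodChar r (ζ := ζ ^ j) (by rw [← pow_mul, mul_comm, pow_mul, hζ, one_pow])

theorem powChar_apply (hζ : ζ ^ r = 1) (j : ℕ) (c : ZMod r) :
    powChar hζ j c = ζ ^ (c.val * j) := by
  rw [powChar, AddChar.zmodChar_apply, pow_mul']

theorem powChar_natCast (hζ : ζ ^ r = 1) (j a : ℕ) : powChar hζ j a = ζ ^ (a * j) := by
  rw [powChar, AddChar.zmodChar_apply', pow_mul']

theorem IsPrimitiveRoot.powChar_succ_injective (hζ : IsPrimitiveRoot ζ r) :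
    Function.Injective fun j : Fin r => powChar hζ.pow_eq_one (j.val + 1) := by
  intro j k h
  have h1 := DFunLike.congr_fun h ((1 : ℕ) : ZMod r)
  simp only [powChar_natCast, one_mul] at h1
  exact hζ.pow_succ_injective h1

end PowChar

theorem simple_current_cocycle_eigenvectors_general
    (r : ℕ) (hr : 0 < r)
    (lam : ZMod r → ZMod r → ZMod r → ℂ) (ζ : ℂ) (hζ : IsPrimitiveRoot ζ r)
    (hne : ∀ i k l : ZMod r, lam i k l ≠ 0 ↔ k = l + i)
    (hcoc : ∀ i j l : ZMod r,
      lam i (l + i) l * lam j (l + i + j) (l + i) = lam (i + j) (l + i + j) l) :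
    (∀ (i c : ZMod r) (j : ℕ),
      ζ ^ (i.val * j) * (ζ ^ (c.val * j) / lam c (c + 1) 1) =
        (ζ ^ ((i + c).val * j) / lam (i + c) (i + c + 1) 1) * lam i (i + c + 1) (c + 1)) ∧
    LinearIndependent ℂ
      (fun j : Fin r => fun c : ZMod r => ζ ^ (c.val * (j.val + 1)) / lam c (c + 1) 1) := by
  have : NeZero r := ⟨hr.ne'⟩
  have hL : ∀ c, lam c (c + 1) 1 ≠ 0 := fun c => (hne _ _ _).2 (add_comm c 1)
  have hcocycle : ∀ i c,
      lam c (c + 1) 1 * lam i (i + c + 1) (c + 1) = lam (i + c) (i + c + 1) 1 := by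
    intro i c
    simpa only [add_comm, add_left_comm, add_assoc] using hcoc c i 1
  refine ⟨fun i c j => ?_, ?_⟩
  · simp only [← powChar_apply hζ.pow_eq_one]
    exact div_mul_eq_of_mul_eq (AddChar.map_add_eq_mul _ i c).symm (hcocycle i c) (hL _)
  · simpa only [Function.comp_apply, powChar_apply] using
      ((AddChar.linearIndependent (ZMod r) ℂ).comp _ hζ.powChar_succ_injective).div_right hL

/-- The combinatorial core of decomposing an induced module: nonzero structure constants
`λ^i_{k,ℓ}` (nonzero exactly when `k = ℓ + i`) satisfying an associativity cocycle
condition produce, for each `1 ≤ j ≤ r`, vectors of ratios satisfying the compatibility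
identity, and these `r` vectors are linearly independent. -/
theorem simple_current_cocycle_eigenvectors
    (r : ℕ) (hr : 0 < r)
    (lam : ZMod r → ZMod r → ZMod r → ℂ) (ζ : ℂ) (hζ : IsPrimitiveRoot ζ r)
    (hne : ∀ i k l : ZMod r, lam i k l ≠ 0 ↔ k = l + i)
    (hone : ∀ l : ZMod r, lam 0 l l = 1)
    (hcoc : ∀ i j l : ZMod r,
      lam i (l + i) l * lam j (l + i + j) (l + i) = lam (i + j) (l + i + j) l) :
    (∀ (i c : ZMod r) (j : ℕ),
      ζ ^ (i.val * j) * (ζ ^ (c.val * j) / lam c (c + 1) 1) =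
        (ζ ^ ((i + c).val * j) / lam (i + c) (i + c + 1) 1) * lam i (i + c + 1) (c + 1)) ∧
    LinearIndependent ℂ
      (fun j : Fin r => fun c : ZMod r => ζ ^ (c.val * (j.val + 1)) / lam c (c + 1) 1) :=
  simple_current_cocycle_eigenvectors_general r hr lam ζ hζ hne hcoc
end

section
/- Let (c_{α,k}) be a doubly indexed family of complex numbers, indexed by α in a finite union of cosets of ℤ in ℚ bounded below and k ∈ {0,…,K}, and consider the formal logarithmic series f(z) = Σ_{α,k} c_{α,k} z^{−α−1} (log z)^k. If f(z) = 0 as a function for all z in some nonempty open subset of ℂ (with a fixed branch of log), then all coefficients c_{α,k} vanish. -/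
/-!
Write `v = log z`, so that the series becomes `F v = ∑ c α k * exp (-(α + 1) v) * v ^ k`.
Unconditional convergence in `ℂ` is absolute, and absolute convergence at one point `v₀ ≠ 0`
dominates the series on the half-plane `re v > re v₀` (the exponents `-(α + 1)` are bounded
above and the powers of `v` have degree at most `K`), so `F` is holomorphic there. It vanishes
on the open set `log O`, which meets this half-plane, hence on the whole half-plane by the
identity theorem, in particular on a real half-line.

The exponents lie in `(1 / M) ℤ`, with `M` the product of the denominators of the coset
representatives, so among the nonzero coefficients there is a least exponent `α₀` and all other
exponents exceed it by at least `1 / M`; let `k₀` be the largest power of the logarithm at `α₀`.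
Multiplying `F x` by `exp ((α₀ + 1) x) / x ^ k₀` and letting `x → ∞` isolates `c α₀ k₀`
(dominated convergence for series), so `c α₀ k₀ = 0`, a contradiction.
-/

open Complex Filter Topology

theorem exists_int_eq_div_prod_den {S : Finset ℚ} {α : ℚ} (h : ∃ s ∈ S, (α - s).den = 1) :
    ∃ n : ℤ, α = n / (∏ s ∈ S, s.den : ℕ) := by
  obtain ⟨s, hs, hden⟩ := h
  obtain ⟨t, ht⟩ := Finset.dvd_prod_of_mem Rat.den hs
  have hint : (((α - s).num : ℤ) : ℚ) = α - s := Rat.coe_int_num_of_den_eq_one hden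
  have hM : ((∏ s ∈ S, s.den : ℕ) : ℚ) ≠ 0 := by
    exact_mod_cast (Finset.prod_pos fun s (_ : s ∈ S) => s.den_pos).ne'
  refine ⟨(α - s).num * (∏ s ∈ S, s.den : ℕ) + s.num * t, ?_⟩
  rw [eq_div_iff hM, ht]
  push_cast
  rw [hint, ← Rat.mul_den_eq_num]
  ring

theorem exists_forall_ne_add_inv_le {D : Set ℚ} {M : ℕ} (hM : 0 < M)
    (hD : ∀ α ∈ D, ∃ n : ℤ, α = n / M) (hne : D.Nonempty) (hbdd : BddBelow D) :
    ∃ α₀ ∈ D, ∀ α ∈ D, α ≠ α₀ → α₀ + (M : ℚ)⁻¹ ≤ α := by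
  obtain ⟨B, hB⟩ := hbdd
  have hMq : (0 : ℚ) < M := by exact_mod_cast hM
  obtain ⟨n₀, hn₀, hleast⟩ := Int.exists_least_of_bdd (P := fun n : ℤ => (n / M : ℚ) ∈ D)
    ⟨⌊B * M⌋, fun n hn => by
      have := hB hn
      rw [le_div_iff₀ hMq] at this
      exact Int.floor_le_iff.2 (by exact_mod_cast this.trans_lt (lt_add_one _))⟩
    (by obtain ⟨α, hα⟩ := hne; obtain ⟨n, rfl⟩ := hD α hα; exact ⟨n, hα⟩)
  refine ⟨n₀ / M, hn₀, fun α hα hne => ?_⟩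
  obtain ⟨n, rfl⟩ := hD α hα
  have hlt : n₀ < n := (hleast n hα).lt_of_ne (by rintro rfl; exact hne rfl)
  have hle : (n₀ : ℚ) + 1 ≤ n := by exact_mod_cast hlt
  rw [div_add' _ _ _ hMq.ne', ← one_div, div_mul_cancel₀ _ hMq.ne']
  exact div_le_div_of_nonneg_right hle hMq.le

theorem IsOpen.exists_mem_norm_lt {O : Set ℂ} (hO : IsOpen O) (hne : O.Nonempty) :
    ∃ z ∈ O, z ≠ 0 ∧ z ≠ 1 ∧ ∃ u ∈ O, u ∈ slitPlane ∧ ‖z‖ < ‖u‖ := by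
  obtain ⟨u, hu, hu_im⟩ :=
    ((dense_compl_singleton (0 : ℝ)).preimage isOpenMap_im).inter_open_nonempty O hO hne
  have hu0 : u ≠ 0 := by rintro rfl; exact hu_im rfl
  have hlim : Tendsto (fun t : ℝ => (t : ℂ) * u) (𝓝[<] 1) (𝓝 u) :=
    ((continuous_ofReal.mul continuous_const).tendsto' 1 u (by simp)).mono_left
      nhdsWithin_le_nhds
  obtain ⟨t, htO, ht⟩ := ((hlim.eventually (hO.mem_nhds hu)).and
    (Ioo_mem_nhdsLT zero_lt_one)).exists
  have htu_im : ((t : ℂ) * u).im ≠ 0 := by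
    simpa [ht.1.ne'] using hu_im
  refine ⟨t * u, htO, fun h => htu_im (by simp [h]), fun h => htu_im (by simp [h]), u, hu,
    mem_slitPlane_iff.2 (Or.inr hu_im), ?_⟩
  rw [norm_mul, norm_real, Real.norm_of_nonneg ht.1.le]
  exact mul_lt_of_lt_one_left (norm_pos_iff.2 hu0) ht.2

theorem pow_le_pow_mul_max_pow {a b : ℝ} {k K : ℕ} (ha : 0 ≤ a) (hb : 0 < b) (hk : k ≤ K) :
    a ^ k ≤ b ^ k * max 1 (a / b) ^ K :=
  calc a ^ k = b ^ k * (a / b) ^ k := by rw [← mul_pow, mul_div_cancel₀ _ hb.ne']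
    _ ≤ b ^ k * max 1 (a / b) ^ k := by gcongr; exact le_max_right _ _
    _ ≤ b ^ k * max 1 (a / b) ^ K := by gcongr; exact le_max_left _ _

theorem differentiableOn_tsum_of_norm_le_mul {ι E : Type*} [NormedAddCommGroup E]
    [NormedSpace ℂ E] [CompleteSpace E] {f : ι → ℂ → E} {u : ι → ℝ} {g : ℂ → ℝ} {U : Set ℂ}
    (hu : Summable u) (hu0 : ∀ i, 0 ≤ u i) (hf : ∀ i, DifferentiableOn ℂ (f i) U)
    (hg : ContinuousOn g U) (hU : IsOpen U) (hfu : ∀ i, ∀ v ∈ U, ‖f i v‖ ≤ u i * g v) :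
    DifferentiableOn ℂ (fun v => ∑' i, f i v) U := by
  intro v hv
  have hW : IsOpen (U ∩ g ⁻¹' Set.Iio (g v + 1)) := hg.isOpen_inter_preimage hU isOpen_Iio
  have hdiff := differentiableOn_tsum_of_summable_norm (hu.mul_right (g v + 1))
    (fun i => (hf i).mono Set.inter_subset_left) hW
    (fun i w hw => (hfu i w hw.1).trans (mul_le_mul_of_nonneg_left hw.2.le (hu0 i)))
  exact (hdiff.differentiableAt (hW.mem_nhds ⟨hv, lt_add_one (g v)⟩)).differentiableWithinAt

theorem eventually_exp_mem_and_log_exp {O : Set ℂ} {u : ℂ} (hO : IsOpen O) (hu : u ∈ O)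
    (hslit : u ∈ slitPlane) : ∀ᶠ v in 𝓝 (log u), exp v ∈ O ∧ log (exp v) = v := by
  have hexp : ∀ᶠ v in 𝓝 (log u), exp v ∈ O := continuous_exp.continuousAt.preimage_mem_nhds
    (by rw [exp_log (slitPlane_ne_zero hslit)]; exact hO.mem_nhds hu)
  have him : (log u).im ∈ Set.Ioo (-Real.pi) Real.pi := by
    rw [log_im]
    exact ⟨neg_pi_lt_arg u, (arg_le_pi u).lt_of_ne (mem_slitPlane_iff_arg.1 hslit).1⟩
  have hstrip : ∀ᶠ v in 𝓝 (log u), v.im ∈ Set.Ioo (-Real.pi) Real.pi :=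
    continuous_im.continuousAt.preimage_mem_nhds (isOpen_Ioo.mem_nhds him)
  filter_upwards [hexp, hstrip] with v hv hv' using ⟨hv, log_exp hv'.1 hv'.2.le⟩

theorem tendsto_exp_neg_mul_mul_pow_div_pow {a : ℝ} {k k₀ : ℕ} (ha : 0 ≤ a) (h : 0 < a ∨ k < k₀) :
    Tendsto (fun x : ℝ => Real.exp (-a * x) * (x ^ k / x ^ k₀)) atTop (𝓝 0) := by
  have hrpow : ∀ᶠ x : ℝ in atTop, x ^ ((k : ℝ) - k₀) * Real.exp (-a * x) =
      Real.exp (-a * x) * (x ^ k / x ^ k₀) := by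
    filter_upwards [eventually_gt_atTop 0] with x hx
    rw [Real.rpow_sub hx, Real.rpow_natCast, Real.rpow_natCast, mul_comm]
  refine Tendsto.congr' hrpow ?_
  rcases ha.lt_or_eq with ha | rfl
  · exact tendsto_rpow_mul_exp_neg_mul_atTop_nhds_zero _ _ ha
  · have hk : (k : ℝ) < k₀ := by exact_mod_cast h.resolve_left (lt_irrefl 0)
    simpa using tendsto_rpow_neg_atTop (sub_pos.2 hk)

theorem exp_neg_mul_mul_pow_div_pow_le {a δ x₀ x : ℝ} {k k₀ K : ℕ} (hx₀ : 1 ≤ x₀) (hx : x₀ ≤ x)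
    (hk : k ≤ K) (h : (a = 0 ∧ k ≤ k₀) ∨ δ ≤ a) (hxδ : Real.exp (-δ * (x - x₀)) * x ^ K ≤ 1) :
    Real.exp (-a * x) * (x ^ k / x ^ k₀) ≤ Real.exp (-a * x₀) * x₀ ^ k := by
  have hx1 : 1 ≤ x := hx₀.trans hx
  have hx₀k : 1 ≤ x₀ ^ k := one_le_pow₀ hx₀
  rcases h with ⟨rfl, hk₀⟩ | hδa
  · simp only [neg_zero, zero_mul, Real.exp_zero, one_mul]
    exact (div_le_one_of_le₀ (pow_le_pow_right₀ hx1 hk₀) (by positivity)).trans hx₀k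
  · calc Real.exp (-a * x) * (x ^ k / x ^ k₀)
        ≤ (Real.exp (-a * x₀) * Real.exp (-δ * (x - x₀))) * x ^ K := by
          gcongr
          · rw [← Real.exp_add]; gcongr; nlinarith
          · exact (div_le_self (by positivity) (one_le_pow₀ hx1)).trans (pow_le_pow_right₀ hx1 hk)
      _ ≤ Real.exp (-a * x₀) * 1 := by rw [mul_assoc]; gcongr
      _ ≤ Real.exp (-a * x₀) * x₀ ^ k := by gcongr

namespace LogSeries

/-- The summand `c α k * z ^ (-α - 1) * (log z) ^ k` in the variable `v = log z`. -/
noncomputable def term (c : ℚ → ℕ → ℂ) (p : ℚ × ℕ) (v : ℂ) : ℂ :=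
  c p.1 p.2 * exp ((-(p.1 : ℝ) - 1 : ℝ) * v) * v ^ p.2

variable {c : ℚ → ℕ → ℂ}

theorem term_log (p : ℚ × ℕ) {z : ℂ} (hz : z ≠ 0) :
    term c p (log z) = c p.1 p.2 * z ^ (-(p.1 : ℂ) - 1) * log z ^ p.2 := by
  rw [term, cpow_def_of_ne_zero hz]
  push_cast
  ring_nf

theorem norm_term (p : ℚ × ℕ) (v : ℂ) :
    ‖term c p v‖ = ‖c p.1 p.2‖ * Real.exp ((-(p.1 : ℝ) - 1) * v.re) * ‖v‖ ^ p.2 := by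
  simp only [term, norm_mul, norm_pow, norm_exp, re_ofReal_mul]

theorem differentiable_term (p : ℚ × ℕ) : Differentiable ℂ (term c p) := by
  unfold term; fun_prop

variable {B : ℚ} {K : ℕ}

theorem norm_term_le (hB : ∀ α k, c α k ≠ 0 → B ≤ α)
    (hK : ∀ α k, K < k → c α k = 0) {v₀ v : ℂ} (hv₀ : v₀ ≠ 0) (hv : v₀.re ≤ v.re) (p : ℚ × ℕ) :
    ‖term c p v‖ ≤ ‖term c p v₀‖ *
      (Real.exp ((-(B : ℝ) - 1) * (v.re - v₀.re)) * max 1 (‖v‖ / ‖v₀‖) ^ K) := by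
  by_cases hc : c p.1 p.2 = 0
  · simp [term, hc]
  have hBα : (B : ℝ) ≤ p.1 := by exact_mod_cast hB _ _ hc
  have hkK : p.2 ≤ K := not_lt.1 fun h => hc (hK _ _ h)
  have hexp : Real.exp ((-(p.1 : ℝ) - 1) * v.re) ≤
      Real.exp ((-(p.1 : ℝ) - 1) * v₀.re) * Real.exp ((-(B : ℝ) - 1) * (v.re - v₀.re)) := by
    rw [← Real.exp_add]
    gcongr
    nlinarith
  have hpow := pow_le_pow_mul_max_pow (norm_nonneg v) (norm_pos_iff.2 hv₀) hkK
  rw [norm_term, norm_term]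
  calc _ ≤ ‖c p.1 p.2‖ * (Real.exp ((-(p.1 : ℝ) - 1) * v₀.re) *
        Real.exp ((-(B : ℝ) - 1) * (v.re - v₀.re))) * (‖v₀‖ ^ p.2 * max 1 (‖v‖ / ‖v₀‖) ^ K) := by
        gcongr
    _ = _ := by ring

theorem summable_norm_term_of_re_le (hB : ∀ α k, c α k ≠ 0 → B ≤ α)
    (hK : ∀ α k, K < k → c α k = 0) {v₀ v : ℂ} (hv₀ : v₀ ≠ 0)
    (hs : Summable fun p => ‖term c p v₀‖) (hv : v₀.re ≤ v.re) :
    Summable fun p => ‖term c p v‖ :=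
  (hs.mul_right _).of_nonneg_of_le (fun _ => norm_nonneg _) (norm_term_le hB hK hv₀ hv)

theorem differentiableOn_tsum_term (hB : ∀ α k, c α k ≠ 0 → B ≤ α)
    (hK : ∀ α k, K < k → c α k = 0) {v₀ : ℂ} (hv₀ : v₀ ≠ 0) (hs : Summable fun p => ‖term c p v₀‖) :
    DifferentiableOn ℂ (fun v => ∑' p, term c p v) {v | v₀.re < v.re} :=
  differentiableOn_tsum_of_norm_le_mul hs (fun _ => norm_nonneg _)
    (fun p => (differentiable_term p).differentiableOn) (by fun_prop)
    (isOpen_lt continuous_const continuous_re) (fun p v hv => norm_term_le hB hK hv₀ hv.le p)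

theorem tsum_term_eq_zero_of_re_lt (hB : ∀ α k, c α k ≠ 0 → B ≤ α)
    (hK : ∀ α k, K < k → c α k = 0) {O : Set ℂ} (hO : IsOpen O)
    (hsum : ∀ z ∈ O, z ≠ 0 → HasSum (fun p => term c p (log z)) 0)
    {v₀ u : ℂ} (hv₀ : v₀ ≠ 0) (hs : Summable fun p => ‖term c p v₀‖) (hu : u ∈ O)
    (hslit : u ∈ slitPlane) (hu_re : v₀.re < (log u).re) {v : ℂ} (hv : v₀.re < v.re) :
    ∑' p, term c p v = 0 := by
  refine ((differentiableOn_tsum_term hB hK hv₀ hs).analyticOnNhd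
    (isOpen_lt continuous_const continuous_re)).eqOn_zero_of_preconnected_of_eventuallyEq_zero
    (convex_halfSpace_re_gt v₀.re).isPreconnected hu_re ?_ hv
  filter_upwards [eventually_exp_mem_and_log_exp hO hu hslit] with w ⟨hwO, hlog⟩
  simpa [hlog] using (hsum _ hwO (exp_ne_zero w)).tsum_eq

theorem term_ofReal_mul (p : ℚ × ℕ) (α₀ : ℚ) (k₀ : ℕ) (x : ℝ) :
    term c p x * ((Real.exp ((α₀ + 1) * x) / x ^ k₀ : ℝ) : ℂ) =
      c p.1 p.2 * ((Real.exp (-((p.1 : ℝ) - α₀) * x) * (x ^ p.2 / x ^ k₀) : ℝ) : ℂ) := by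
  have hexp : Real.exp ((-(p.1 : ℝ) - 1) * x) * Real.exp ((α₀ + 1) * x) =
      Real.exp (-((p.1 : ℝ) - α₀) * x) := by
    rw [← Real.exp_add]; ring_nf
  simp only [term, ← ofReal_mul, ← ofReal_exp, ← ofReal_pow]
  rw [← hexp]
  push_cast
  ring

def LeadsWithGap (c : ℚ → ℕ → ℂ) (α₀ : ℚ) (k₀ : ℕ) (δ : ℚ) : Prop :=
  ∀ α k, c α k ≠ 0 → (α = α₀ ∧ k ≤ k₀) ∨ α₀ + δ ≤ α

theorem exists_leadsWithGap {M : ℕ} (hM : 0 < M)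
    (hD : ∀ α, (∃ k, c α k ≠ 0) → ∃ n : ℤ, α = n / M) (hB : ∀ α k, c α k ≠ 0 → B ≤ α)
    (hK : ∀ α k, K < k → c α k = 0) (hc : ∃ α k, c α k ≠ 0) :
    ∃ α₀ k₀, c α₀ k₀ ≠ 0 ∧ LeadsWithGap c α₀ k₀ (M : ℚ)⁻¹ := by
  obtain ⟨α₀, ⟨k, hk⟩, hgap⟩ := exists_forall_ne_add_inv_le (D := {α | ∃ k, c α k ≠ 0}) hM hD
    hc ⟨B, fun α ⟨k, hk⟩ => hB α k hk⟩
  have hbdd : BddAbove {k | c α₀ k ≠ 0} := ⟨K, fun k hk => not_lt.1 fun h => hk (hK _ _ h)⟩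
  refine ⟨α₀, _, Nat.sSup_mem ⟨k, hk⟩ hbdd, fun α j hc => ?_⟩
  by_cases hα : α = α₀
  · subst hα; exact Or.inl ⟨rfl, le_csSup hbdd hc⟩
  · exact Or.inr (hgap α ⟨j, hc⟩ hα)

theorem tendsto_term_mul_exp_div_pow {α₀ δ : ℚ} {k₀ : ℕ} (h : LeadsWithGap c α₀ k₀ δ)
    (hδ : 0 < δ) (p : ℚ × ℕ) :
    Tendsto (fun x : ℝ => term c p x * ((Real.exp ((α₀ + 1) * x) / x ^ k₀ : ℝ) : ℂ)) atTop
      (𝓝 (if p = (α₀, k₀) then c α₀ k₀ else 0)) := by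
  simp_rw [term_ofReal_mul]
  by_cases hp : p = (α₀, k₀)
  · subst hp
    refine tendsto_const_nhds.congr' ?_
    filter_upwards [eventually_gt_atTop 0] with x hx
    simp [hx.ne']
  by_cases hc : c p.1 p.2 = 0
  · simp [hc, hp]
  have hδ' : (0 : ℝ) < δ := by exact_mod_cast hδ
  obtain ⟨h0, hpos⟩ : 0 ≤ (p.1 : ℝ) - α₀ ∧ (0 < (p.1 : ℝ) - α₀ ∨ p.2 < k₀) := by
    rcases h _ _ hc with ⟨hα, hk⟩ | hα
    · exact ⟨by simp [hα], Or.inr (hk.lt_of_ne fun hk => hp (Prod.ext hα hk))⟩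
    · have : (α₀ : ℝ) + δ ≤ p.1 := by exact_mod_cast hα
      constructor <;> [linarith; exact Or.inl (by linarith)]
  simpa [hp] using ((continuous_ofReal.tendsto 0).comp
    (tendsto_exp_neg_mul_mul_pow_div_pow h0 hpos)).const_mul (c p.1 p.2)

theorem norm_term_mul_exp_div_pow_le {α₀ δ : ℚ} {k₀ : ℕ} {x₀ x : ℝ}
    (h : LeadsWithGap c α₀ k₀ δ) (hK : ∀ α k, K < k → c α k = 0) (hx₀ : 1 ≤ x₀) (hx : x₀ ≤ x)
    (hxδ : Real.exp (-δ * (x - x₀)) * x ^ K ≤ 1) (p : ℚ × ℕ) :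
    ‖term c p x * ((Real.exp ((α₀ + 1) * x) / x ^ k₀ : ℝ) : ℂ)‖ ≤
      Real.exp ((α₀ + 1) * x₀) * ‖term c p x₀‖ := by
  rw [term_ofReal_mul]
  by_cases hc : c p.1 p.2 = 0
  · simp only [hc, zero_mul, norm_zero]; positivity
  have hx0 : 0 < x := zero_lt_one.trans_le (hx₀.trans hx)
  have hk : p.2 ≤ K := not_lt.1 fun h => hc (hK _ _ h)
  have hcase : ((p.1 : ℝ) - α₀ = 0 ∧ p.2 ≤ k₀) ∨ (δ : ℝ) ≤ p.1 - α₀ := by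
    rcases h _ _ hc with ⟨hα, hk₀⟩ | hα
    · exact Or.inl ⟨by simp [hα], hk₀⟩
    · exact Or.inr (by rw [le_sub_iff_add_le']; exact_mod_cast hα)
  have hexp : Real.exp ((α₀ + 1) * x₀) * Real.exp ((-(p.1 : ℝ) - 1) * x₀) =
      Real.exp (-((p.1 : ℝ) - α₀) * x₀) := by
    rw [← Real.exp_add]; ring_nf
  rw [norm_mul, norm_real, Real.norm_of_nonneg (by positivity), norm_term, ofReal_re,
    norm_real, Real.norm_of_nonneg (zero_le_one.trans hx₀)]
  calc _ ≤ ‖c p.1 p.2‖ * (Real.exp (-((p.1 : ℝ) - α₀) * x₀) * x₀ ^ p.2) :=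
        mul_le_mul_of_nonneg_left (exp_neg_mul_mul_pow_div_pow_le hx₀ hx hk hcase hxδ)
          (norm_nonneg _)
    _ = _ := by rw [← hexp]; ring

theorem tendsto_tsum_term_mul_exp_div_pow {α₀ δ : ℚ} {k₀ : ℕ} {x₀ : ℝ}
    (h : LeadsWithGap c α₀ k₀ δ) (hδ : 0 < δ) (hK : ∀ α k, K < k → c α k = 0) (hx₀ : 1 ≤ x₀)
    (hs : Summable fun p => ‖term c p x₀‖) :
    Tendsto (fun x : ℝ => (∑' p, term c p x) * ((Real.exp ((α₀ + 1) * x) / x ^ k₀ : ℝ) : ℂ))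
      atTop (𝓝 (c α₀ k₀)) := by
  have hdecay : ∀ᶠ x : ℝ in atTop, x₀ ≤ x ∧ Real.exp (-δ * (x - x₀)) * x ^ K ≤ 1 := by
    have hlim := (tendsto_exp_neg_mul_mul_pow_div_pow (k₀ := 0) (k := K) (a := δ)
      (by exact_mod_cast hδ.le) (Or.inl (by exact_mod_cast hδ))).const_mul (Real.exp (δ * x₀))
    rw [mul_zero] at hlim
    filter_upwards [eventually_ge_atTop x₀, hlim.eventually (gt_mem_nhds one_pos)] with x hx hlt
    refine ⟨hx, le_of_lt (lt_of_eq_of_lt ?_ hlt)⟩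
    rw [pow_zero, div_one, ← mul_assoc, ← Real.exp_add]
    ring_nf
  simp_rw [← tsum_mul_right]
  rw [← tsum_ite_eq (α₀, k₀) (fun _ => c α₀ k₀)]
  refine tendsto_tsum_of_dominated_convergence (hs.mul_left (Real.exp ((α₀ + 1) * x₀)))
    (tendsto_term_mul_exp_div_pow h hδ) ?_
  filter_upwards [hdecay] with x ⟨hx, hxδ⟩
  exact norm_term_mul_exp_div_pow_le h hK hx₀ hx hxδ

end LogSeries

theorem log_series_coefficient_uniqueness_general
    (K : ℕ) (c : ℚ → ℕ → ℂ)
    (hcoset : ∃ S : Finset ℚ, ∀ α : ℚ, (∃ k, c α k ≠ 0) → ∃ s ∈ S, (α - s).den = 1)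
    (hbound : ∃ B : ℚ, ∀ (α : ℚ) (k : ℕ), c α k ≠ 0 → B ≤ α)
    (hdeg : ∀ (α : ℚ) (k : ℕ), K < k → c α k = 0)
    (O : Set ℂ) (hO : IsOpen O) (hne : O.Nonempty)
    (hsum : ∀ z ∈ O, HasSum
      (fun p : ℚ × ℕ => c p.1 p.2 * z ^ (-(p.1 : ℂ) - 1) * Complex.log z ^ p.2) 0) :
    ∀ (α : ℚ) (k : ℕ), c α k = 0 := by
  by_contra! hc
  obtain ⟨S, hS⟩ := hcoset
  obtain ⟨B, hB⟩ := hbound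
  obtain ⟨α₀, k₀, hk₀, hlead⟩ := LogSeries.exists_leadsWithGap
    (Finset.prod_pos fun s (_ : s ∈ S) => s.den_pos)
    (fun α hα => exists_int_eq_div_prod_den (hS α hα)) hB hdeg hc
  obtain ⟨z₀, hz₀, hz₀0, hz₀1, u, hu, hslit, hlt⟩ := hO.exists_mem_norm_lt hne
  have hsum' (z : ℂ) (hz : z ∈ O) (hz0 : z ≠ 0) :
      HasSum (fun p => LogSeries.term c p (log z)) 0 := by
    simpa only [LogSeries.term_log _ hz0] using hsum z hz
  have hv₀ : log z₀ ≠ 0 := fun h => hz₀1 (by rw [← exp_log hz₀0, h, exp_zero])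
  have hs := summable_norm_iff.2 (hsum' z₀ hz₀ hz₀0).summable
  have hu_re : (log z₀).re < (log u).re := by
    simpa only [log_re] using Real.log_lt_log (norm_pos_iff.2 hz₀0) hlt
  set x₀ := max 1 ((log z₀).re + 1)
  have hre (x : ℝ) (hx : x₀ ≤ x) : (log z₀).re < (x : ℂ).re := by
    rw [ofReal_re]; linarith [le_max_right 1 ((log z₀).re + 1)]
  have hlim := LogSeries.tendsto_tsum_term_mul_exp_div_pow hlead (by positivity) hdeg
    (le_max_left _ _) (LogSeries.summable_norm_term_of_re_le hB hdeg hv₀ hs (hre x₀ le_rfl).le)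
  refine hk₀ (tendsto_nhds_unique hlim (tendsto_const_nhds.congr' ?_))
  filter_upwards [eventually_ge_atTop x₀] with x hx
  rw [LogSeries.tsum_term_eq_zero_of_re_lt hB hdeg hO hsum' hv₀ hs hu hslit hu_re (hre x hx),
    zero_mul]

/-- Uniqueness of coefficients for convergent logarithmic series: if the exponents of
`f(z) = Σ c_{α,k} z^{-α-1} (log z)^k` lie in a finite union of cosets of ℤ in ℚ, are
bounded below, the log-degree is bounded by `K`, and `f` vanishes on a nonempty open set,
then all coefficients vanish. -/
theorem log_series_coefficient_uniqueness
    (K : ℕ) (c : ℚ → ℕ → ℂ)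
    (hcoset : ∃ S : Finset ℚ, ∀ α : ℚ, (∃ k, c α k ≠ 0) → ∃ s ∈ S, (α - s).den = 1)
    (hbound : ∃ B : ℚ, ∀ (α : ℚ) (k : ℕ), c α k ≠ 0 → B ≤ α)
    (hdeg : ∀ (α : ℚ) (k : ℕ), K < k → c α k = 0)
    (O : Set ℂ) (hO : IsOpen O) (hne : O.Nonempty) (h0 : (0 : ℂ) ∉ O)
    (hsum : ∀ z ∈ O, HasSum
      (fun p : ℚ × ℕ => c p.1 p.2 * z ^ (-(p.1 : ℂ) - 1) * Complex.log z ^ p.2) 0) :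
    ∀ (α : ℚ) (k : ℕ), c α k = 0 :=
  log_series_coefficient_uniqueness_general K c hcoset hbound hdeg O hO hne hsum
end
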